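/- Let α ∈ (1, 2], β₀ ∈ (−1, 0), Λ ∈ (0, α − 1), T > 0, β ∈ [0, (β₀ + α) ∧ (α − Λ)) and γ ∈ [0, α ∧ (α − 1 + β − β₀)). Then there exists a constant C_T > 0 such that for every t ∈ (0, T] and every Borel measurable f : [0, T] → [0, ∞), ∫₀ᵗ G_β(t, s) s^{−γ/α} ( ∫₀ˢ G_β(s, r) f(r) dr ) ds ≤ C_T ∫₀ᵗ G_β(t, s) f(s) ds. -/

import Mathlib

/-!
By Tonelli, the left side equals `∫₀ᵗ f(r) ∫ᵣᵗ G(t,s) s^{-γ/α} G(s,r) ds dr`, so it suffices to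
bound the composed kernel by `C G(t,r)`. The kernel `G` is a sum of two power kernels
`t^μ (t-s)^{-a}` with `0 ≤ a < 1` and a common degree `κ = μ - a = (β - β₀ - 1)/α`.
Split `(r,t)` at its midpoint. On the half near `r`, `G(t,s) ≤ 2 G(t,r)`, and
`s^{-γ/α} G(s,r)` is integrable uniformly in `r` because `γ/α < κ + 1`. On the half near `t`,
`s^{-γ/α} G(s,r) ≤ 4 t^{-γ/α} G(t,r)` while `∫ G(t,s) ds ≲ t^{κ+1}`, and
`t^{κ+1-γ/α} ≤ T^{κ+1-γ/α}`.
-/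

open MeasureTheory Set

/-- The kinetic Volterra kernel
`G_β(t,s) = t^{(β-β₀)/α} (t-s)^{-1/α} + t^{(β+Λ)/α} (t-s)^{-(Λ+β₀+1)/α}`. -/
noncomputable def Gker (α β₀ Λ β t s : ℝ) : ℝ :=
  t ^ ((β - β₀) / α) * (t - s) ^ (-(1 / α)) +
    t ^ ((β + Λ) / α) * (t - s) ^ (-((Λ + β₀ + 1) / α))

lemma setLIntegral_Ioo_sub_rpow {u v w : ℝ} (huv : u ≤ v) (hw : -1 < w) :
    ∫⁻ s in Ioo u v, ENNReal.ofReal ((s - u) ^ w) =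
      ENNReal.ofReal ((v - u) ^ (w + 1) / (w + 1)) := by
  have hint : IntervalIntegrable (fun s => (s - u) ^ w) volume u v := by
    simpa using
      (intervalIntegral.intervalIntegrable_rpow' (a := 0) (b := v - u) hw).comp_sub_right u
  rw [setLIntegral_congr Ioo_ae_eq_Ioc, ← ofReal_integral_eq_lintegral_ofReal
      (intervalIntegrable_iff_integrableOn_Ioc_of_le huv |>.mp hint)
      ((ae_restrict_iff' measurableSet_Ioc).mpr (ae_of_all _ fun s hs =>
        Real.rpow_nonneg (sub_nonneg.mpr hs.1.le) w)),
    ← intervalIntegral.integral_of_le huv, intervalIntegral.integral_comp_sub_right (· ^ w),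
    integral_rpow (Or.inl hw), sub_self, Real.zero_rpow (by linarith), sub_zero]

lemma setLIntegral_Ioo_rpow_sub {u v w : ℝ} (huv : u ≤ v) (hw : -1 < w) :
    ∫⁻ s in Ioo u v, ENNReal.ofReal ((v - s) ^ w) =
      ENNReal.ofReal ((v - u) ^ (w + 1) / (w + 1)) := by
  have hint : IntervalIntegrable (fun s => (v - s) ^ w) volume u v := by
    simpa using
      (intervalIntegral.intervalIntegrable_rpow' (a := v - u) (b := 0) hw).comp_sub_left v
  rw [setLIntegral_congr Ioo_ae_eq_Ioc, ← ofReal_integral_eq_lintegral_ofReal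
      (intervalIntegrable_iff_integrableOn_Ioc_of_le huv |>.mp hint)
      ((ae_restrict_iff' measurableSet_Ioc).mpr (ae_of_all _ fun s hs =>
        Real.rpow_nonneg (sub_nonneg.mpr hs.2) w)),
    ← intervalIntegral.integral_of_le huv, intervalIntegral.integral_comp_sub_left (· ^ w),
    integral_rpow (Or.inl hw), sub_self, Real.zero_rpow (by linarith), sub_zero]

lemma rpow_neg_le_two_mul_rpow_neg {d x p : ℝ} (hd : 0 < d) (hx : d ≤ 2 * x)
    (hp₀ : 0 ≤ p) (hp₁ : p ≤ 1) : x ^ (-p) ≤ 2 * d ^ (-p) :=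
  calc x ^ (-p) ≤ (d / 2) ^ (-p) :=
        Real.rpow_le_rpow_of_nonpos (by positivity) (by linarith) (by linarith)
    _ = 2 ^ p * d ^ (-p) := by
      rw [Real.div_rpow hd.le zero_le_two, Real.rpow_neg zero_le_two, div_inv_eq_mul, mul_comm]
    _ ≤ 2 * d ^ (-p) := by
      gcongr
      simpa using Real.rpow_le_rpow_of_exponent_le one_le_two hp₁

lemma setLIntegral_ofReal_add_le {f g : ℝ → ℝ} {S : Set ℝ} {x y : ℝ} (hf : Measurable f)
    (hx : 0 ≤ x) (hy : 0 ≤ y) (hfx : ∫⁻ s in S, ENNReal.ofReal (f s) ≤ ENNReal.ofReal x)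
    (hgy : ∫⁻ s in S, ENNReal.ofReal (g s) ≤ ENNReal.ofReal y) :
    ∫⁻ s in S, ENNReal.ofReal (f s + g s) ≤ ENNReal.ofReal (x + y) :=
  calc ∫⁻ s in S, ENNReal.ofReal (f s + g s)
      ≤ ∫⁻ s in S, (ENNReal.ofReal (f s) + ENNReal.ofReal (g s)) :=
        lintegral_mono fun _ => ENNReal.ofReal_add_le
    _ ≤ ENNReal.ofReal (x + y) := by
        rw [lintegral_add_left hf.ennreal_ofReal, ENNReal.ofReal_add hx hy]
        exact add_le_add hfx hgy

theorem setLIntegral_Ioo_mul_setLIntegral_Ioo_le {A L g : ℝ → ENNReal} {B : ℝ → ℝ → ENNReal}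
    (hA : Measurable A) (hB : Measurable (Function.uncurry B)) (hg : Measurable g)
    {a t : ℝ} {C : ENNReal} (hC : C ≠ ⊤)
    (hAB : ∀ r ∈ Ioo a t, ∫⁻ s in Ioo r t, A s * B s r ≤ C * L r) :
    ∫⁻ s in Ioo a t, A s * ∫⁻ r in Ioo a s, B s r * g r ≤ C * ∫⁻ r in Ioo a t, L r * g r := by
  set F : ℝ → ℝ → ENNReal := fun s r => (Ioo a s).indicator (fun r => A s * B s r * g r) r
  have hF : Measurable (Function.uncurry F) := by
    refine Measurable.indicator (by fun_prop) ?_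
    exact (measurableSet_lt measurable_const measurable_snd).inter
      (measurableSet_lt measurable_snd measurable_fst)
  have hinner : ∀ s, A s * ∫⁻ r in Ioo a s, B s r * g r = ∫⁻ r, F s r := fun s => by
    rw [lintegral_indicator measurableSet_Ioo, ← lintegral_const_mul _ (by fun_prop)]
    simp only [mul_assoc]
  have houter : ∀ r, ∫⁻ s in Ioo a t, F s r ≤ (Ioo a t).indicator (fun r => C * (L r * g r)) r := by
    intro r
    by_cases hr : r ∈ Ioo a t
    · have hrestrict : ∫⁻ s in Ioo a t, F s r = ∫⁻ s in Ioo r t, A s * B s r * g r := by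
        rw [← lintegral_indicator measurableSet_Ioo, ← lintegral_indicator measurableSet_Ioo]
        congr 1 with s
        simp only [F, indicator_apply, mem_Ioo]
        split_ifs <;> first | rfl | (exfalso; grind)
      rw [indicator_of_mem hr, hrestrict, lintegral_mul_const _ (by fun_prop), ← mul_assoc]
      gcongr
      exact hAB r hr
    · have hzero : ∀ s ∈ Ioo a t, F s r = 0 := fun s hs =>
        indicator_of_notMem (fun hrs => hr ⟨hrs.1, hrs.2.trans hs.2⟩) _
      rw [indicator_of_notMem hr, setLIntegral_congr_fun measurableSet_Ioo hzero, lintegral_zero]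
  calc ∫⁻ s in Ioo a t, A s * ∫⁻ r in Ioo a s, B s r * g r
      = ∫⁻ r, ∫⁻ s in Ioo a t, F s r := by
        simp_rw [hinner]
        exact lintegral_lintegral_swap hF.aemeasurable
    _ ≤ ∫⁻ r, (Ioo a t).indicator (fun r => C * (L r * g r)) r := lintegral_mono houter
    _ = C * ∫⁻ r in Ioo a t, L r * g r := by
        rw [lintegral_indicator measurableSet_Ioo, lintegral_const_mul' _ _ hC]

theorem setLIntegral_kernel_comp_le {k : ℝ → ℝ → ℝ} {c κ T D K : ℝ}
    (hk_nonneg : ∀ r s, 0 < r → r < s → 0 ≤ k s r)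
    (hleft : ∀ r s t, 0 < r → r < s → s < t → t - r ≤ 2 * (t - s) → k t s ≤ 2 * k t r)
    (hright : ∀ r s t, 0 < r → r < s → s < t → t - r ≤ 2 * (s - r) → k s r ≤ 2 * k t r)
    (hD : ∀ r v, 0 < r → r < v → v ≤ T →
      ∫⁻ s in Ioo r v, ENNReal.ofReal (s ^ (-c) * k s r) ≤ ENNReal.ofReal D)
    (hK : ∀ u t, 0 < u → u < t →
      ∫⁻ s in Ioo u t, ENNReal.ofReal (k t s) ≤ ENNReal.ofReal (K * t ^ (κ + 1)))
    (hD₀ : 0 ≤ D) (hK₀ : 0 ≤ K) (hc₀ : 0 ≤ c) (hc₁ : c ≤ 1) (hcκ : c ≤ κ + 1)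
    {r t : ℝ} (hr : 0 < r) (hrt : r < t) (htT : t ≤ T) :
    ∫⁻ s in Ioo r t, ENNReal.ofReal (k t s * s ^ (-c)) * ENNReal.ofReal (k s r) ≤
      ENNReal.ofReal (2 * D + 4 * K * T ^ (κ + 1 - c)) * ENNReal.ofReal (k t r) := by
  set m := (r + t) / 2 with hm
  have hrm : r < m := by linarith
  have hmt : m < t := by linarith
  have ht : 0 < t := hr.trans hrt
  have hktr : 0 ≤ k t r := hk_nonneg r t hr hrt
  have hKT : 0 ≤ 4 * K * T ^ (κ + 1 - c) :=
    mul_nonneg (mul_nonneg zero_le_four hK₀) (Real.rpow_nonneg (ht.le.trans htT) _)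
  have hfactor : ∀ s ∈ Ioo r t, ENNReal.ofReal (k t s * s ^ (-c)) * ENNReal.ofReal (k s r) =
      ENNReal.ofReal (k t s) * ENNReal.ofReal (s ^ (-c) * k s r) := fun s hs => by
    have hsc : 0 ≤ s ^ (-c) := Real.rpow_nonneg (hr.trans hs.1).le _
    rw [ENNReal.ofReal_mul' hsc, ENNReal.ofReal_mul hsc, mul_assoc]
  rw [setLIntegral_congr_fun measurableSet_Ioo hfactor, ← Ioo_union_Ico_eq_Ioo hrm hmt.le]
  have hleft_half : ∫⁻ s in Ioo r m, ENNReal.ofReal (k t s) * ENNReal.ofReal (s ^ (-c) * k s r) ≤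
      ENNReal.ofReal (2 * D) * ENNReal.ofReal (k t r) :=
    calc ∫⁻ s in Ioo r m, ENNReal.ofReal (k t s) * ENNReal.ofReal (s ^ (-c) * k s r)
        ≤ ∫⁻ s in Ioo r m, ENNReal.ofReal (2 * k t r) * ENNReal.ofReal (s ^ (-c) * k s r) :=
          setLIntegral_mono' measurableSet_Ioo fun s hs => by
            gcongr
            exact hleft r s t hr hs.1 (hs.2.trans hmt) (by linarith [hs.2])
      _ ≤ ENNReal.ofReal (2 * k t r) * ENNReal.ofReal D := by
          rw [lintegral_const_mul' _ _ ENNReal.ofReal_ne_top]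
          gcongr
          exact hD r m hr hrm (hmt.le.trans htT)
      _ = ENNReal.ofReal (2 * D) * ENNReal.ofReal (k t r) := by
          rw [← ENNReal.ofReal_mul (by positivity), ← ENNReal.ofReal_mul (by positivity)]
          ring_nf
  have hright_half : ∫⁻ s in Ioo m t, ENNReal.ofReal (k t s) * ENNReal.ofReal (s ^ (-c) * k s r) ≤
      ENNReal.ofReal (4 * K * T ^ (κ + 1 - c)) * ENNReal.ofReal (k t r) :=
    calc ∫⁻ s in Ioo m t, ENNReal.ofReal (k t s) * ENNReal.ofReal (s ^ (-c) * k s r)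
        ≤ ∫⁻ s in Ioo m t, ENNReal.ofReal (k t s) * ENNReal.ofReal (4 * t ^ (-c) * k t r) :=
          setLIntegral_mono' measurableSet_Ioo fun s hs => by
            have hsc : s ^ (-c) ≤ 2 * t ^ (-c) :=
              rpow_neg_le_two_mul_rpow_neg (by linarith) (by linarith [hs.1]) hc₀ hc₁
            have hksr : k s r ≤ 2 * k t r :=
              hright r s t hr (by linarith [hs.1]) hs.2 (by linarith [hs.1])
            refine mul_le_mul_right (ENNReal.ofReal_le_ofReal ?_) _
            calc s ^ (-c) * k s r ≤ (2 * t ^ (-c)) * (2 * k t r) :=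
                  mul_le_mul hsc hksr (hk_nonneg r s hr (by linarith [hs.1])) (by positivity)
              _ = 4 * t ^ (-c) * k t r := by ring
      _ ≤ ENNReal.ofReal (K * t ^ (κ + 1)) * ENNReal.ofReal (4 * t ^ (-c) * k t r) := by
          rw [lintegral_mul_const' _ _ ENNReal.ofReal_ne_top]
          gcongr
          exact hK m t (by linarith) hmt
      _ = ENNReal.ofReal (4 * K * t ^ (κ + 1 - c) * k t r) := by
          rw [← ENNReal.ofReal_mul (mul_nonneg hK₀ (by positivity)), Real.rpow_sub ht,
            Real.rpow_neg ht.le]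
          ring_nf
      _ ≤ ENNReal.ofReal (4 * K * T ^ (κ + 1 - c)) * ENNReal.ofReal (k t r) := by
          rw [← ENNReal.ofReal_mul hKT]
          gcongr
  calc _ ≤ _ := lintegral_union_le _ _ _
    _ ≤ ENNReal.ofReal (2 * D) * ENNReal.ofReal (k t r) +
        ENNReal.ofReal (4 * K * T ^ (κ + 1 - c)) * ENNReal.ofReal (k t r) := by
        rw [setLIntegral_congr Ioo_ae_eq_Ico.symm]
        exact add_le_add hleft_half hright_half
    _ = _ := by rw [← add_mul, ← ENNReal.ofReal_add (by positivity) hKT]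

noncomputable def powerKernel (μ a t s : ℝ) : ℝ := t ^ μ * (t - s) ^ (-a)

namespace powerKernel

variable {μ a t s r : ℝ}

lemma nonneg (hs : 0 ≤ s) (hrs : r ≤ s) : 0 ≤ powerKernel μ a s r :=
  mul_nonneg (Real.rpow_nonneg hs μ) (Real.rpow_nonneg (sub_nonneg.mpr hrs) (-a))

lemma le_two_mul_of_far_from_diag (ha₀ : 0 ≤ a) (ha₁ : a ≤ 1) (ht : 0 ≤ t) (hrt : r < t)
    (hs : t - r ≤ 2 * (t - s)) : powerKernel μ a t s ≤ 2 * powerKernel μ a t r :=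
  calc t ^ μ * (t - s) ^ (-a) ≤ t ^ μ * (2 * (t - r) ^ (-a)) := by
        gcongr
        exact rpow_neg_le_two_mul_rpow_neg (sub_pos.mpr hrt) hs ha₀ ha₁
    _ = 2 * (t ^ μ * (t - r) ^ (-a)) := by ring

lemma le_two_mul_of_far_from_start (hμ : 0 ≤ μ) (ha₀ : 0 ≤ a) (ha₁ : a ≤ 1) (hr : 0 ≤ r)
    (hrs : r < s) (hst : s ≤ t) (hs : t - r ≤ 2 * (s - r)) :
    powerKernel μ a s r ≤ 2 * powerKernel μ a t r :=
  calc s ^ μ * (s - r) ^ (-a) ≤ t ^ μ * (2 * (t - r) ^ (-a)) := by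
        gcongr
        · exact Real.rpow_nonneg (by linarith) _
        · linarith
        · exact rpow_neg_le_two_mul_rpow_neg (by linarith) hs ha₀ ha₁
    _ = 2 * (t ^ μ * (t - r) ^ (-a)) := by ring

lemma setLIntegral_snd_le {u : ℝ} (ha : a < 1) (hu : 0 ≤ u) (hut : u < t) :
    ∫⁻ s in Ioo u t, ENNReal.ofReal (powerKernel μ a t s) ≤
      ENNReal.ofReal ((1 - a)⁻¹ * t ^ (μ - a + 1)) := by
  have ht : 0 < t := hu.trans_lt hut
  calc ∫⁻ s in Ioo u t, ENNReal.ofReal (t ^ μ * (t - s) ^ (-a))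
      = ENNReal.ofReal (t ^ μ) * ∫⁻ s in Ioo u t, ENNReal.ofReal ((t - s) ^ (-a)) := by
        simp_rw [ENNReal.ofReal_mul (Real.rpow_nonneg ht.le μ)]
        exact lintegral_const_mul' _ _ ENNReal.ofReal_ne_top
    _ = ENNReal.ofReal (t ^ μ * ((t - u) ^ (-a + 1) / (-a + 1))) := by
        rw [setLIntegral_Ioo_rpow_sub hut.le (by linarith),
          ENNReal.ofReal_mul (Real.rpow_nonneg ht.le μ)]
    _ ≤ ENNReal.ofReal (t ^ μ * (t ^ (1 - a) / (1 - a))) := by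
        rw [neg_add_eq_sub]
        gcongr
        linarith
    _ = ENNReal.ofReal ((1 - a)⁻¹ * t ^ (μ - a + 1)) := by
        rw [show μ - a + 1 = μ + (1 - a) by ring, Real.rpow_add ht]
        ring_nf

lemma exists_setLIntegral_rpow_mul_le {c T : ℝ} (hT : 0 < T) (ha : a < 1)
    (hc : c < μ - a + 1) :
    ∃ D, 0 ≤ D ∧ ∀ r v, 0 < r → r < v → v ≤ T →
      ∫⁻ s in Ioo r v, ENNReal.ofReal (s ^ (-c) * powerKernel μ a s r) ≤ ENNReal.ofReal D := by
  -- the weight `s ^ (μ - c)` is bounded by `T ^ (μ - c)` or, when singular, by `(s - r) ^ (μ - c)`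
  obtain ⟨M, e, hM, he, hbound⟩ : ∃ M e : ℝ, 0 ≤ M ∧ -1 < e ∧ ∀ r s, 0 < r → r < s → s ≤ T →
      s ^ (-c) * powerKernel μ a s r ≤ M * (s - r) ^ e := by
    rcases le_or_gt c μ with hcμ | hμc
    · refine ⟨T ^ (μ - c), -a, by positivity, by linarith, fun r s hr hrs hsT => ?_⟩
      have hs : 0 < s := hr.trans hrs
      rw [powerKernel, ← mul_assoc, ← Real.rpow_add hs, neg_add_eq_sub]
      gcongr
    · refine ⟨1, μ - c - a, zero_le_one, by linarith, fun r s hr hrs hsT => ?_⟩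
      have hs : 0 < s := hr.trans hrs
      rw [powerKernel, ← mul_assoc, ← Real.rpow_add hs, neg_add_eq_sub, one_mul,
        show μ - c - a = (μ - c) + -a by ring, Real.rpow_add (by linarith)]
      exact mul_le_mul_of_nonneg_right
        (Real.rpow_le_rpow_of_nonpos (by linarith) (by linarith) (by linarith))
        (Real.rpow_nonneg (by linarith) _)
  have he' : 0 < e + 1 := by linarith
  refine ⟨M * (T ^ (e + 1) / (e + 1)), by positivity, fun r v hr hrv hvT => ?_⟩
  calc ∫⁻ s in Ioo r v, ENNReal.ofReal (s ^ (-c) * powerKernel μ a s r)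
      ≤ ∫⁻ s in Ioo r v, ENNReal.ofReal M * ENNReal.ofReal ((s - r) ^ e) :=
        setLIntegral_mono' measurableSet_Ioo fun s hs => by
          rw [← ENNReal.ofReal_mul hM]
          exact ENNReal.ofReal_le_ofReal (hbound r s hr hs.1 (hs.2.le.trans hvT))
    _ = ENNReal.ofReal (M * ((v - r) ^ (e + 1) / (e + 1))) := by
        rw [lintegral_const_mul' _ _ ENNReal.ofReal_ne_top, setLIntegral_Ioo_sub_rpow hrv.le he,
          ENNReal.ofReal_mul hM]
    _ ≤ ENNReal.ofReal (M * (T ^ (e + 1) / (e + 1))) := by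
        gcongr
        linarith

end powerKernel

theorem exists_setLIntegral_powerKernel_add_comp_le {k : ℝ → ℝ → ℝ} {μ₁ a₁ μ₂ a₂ c κ T : ℝ}
    (hk : k = fun t s => powerKernel μ₁ a₁ t s + powerKernel μ₂ a₂ t s)
    (hμ₁ : 0 ≤ μ₁) (hμ₂ : 0 ≤ μ₂) (ha₁ : a₁ ∈ Ico 0 1) (ha₂ : a₂ ∈ Ico 0 1)
    (hκ₁ : μ₁ - a₁ = κ) (hκ₂ : μ₂ - a₂ = κ) (hc : c ∈ Icc 0 1) (hcκ : c < κ + 1) (hT : 0 < T) :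
    ∃ C, 0 < C ∧ ∀ r t, 0 < r → r < t → t ≤ T →
      ∫⁻ s in Ioo r t, ENNReal.ofReal (k t s * s ^ (-c)) * ENNReal.ofReal (k s r) ≤
        ENNReal.ofReal C * ENNReal.ofReal (k t r) := by
  obtain ⟨D₁, hD₁, hD₁_le⟩ :=
    powerKernel.exists_setLIntegral_rpow_mul_le (μ := μ₁) (c := c) hT ha₁.2 (by linarith)
  obtain ⟨D₂, hD₂, hD₂_le⟩ :=
    powerKernel.exists_setLIntegral_rpow_mul_le (μ := μ₂) (c := c) hT ha₂.2 (by linarith)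
  have h₁ : 0 < 1 - a₁ := sub_pos.mpr ha₁.2
  have h₂ : 0 < 1 - a₂ := sub_pos.mpr ha₂.2
  have hK : 0 < (1 - a₁)⁻¹ + (1 - a₂)⁻¹ := by positivity
  refine ⟨2 * (D₁ + D₂) + 4 * ((1 - a₁)⁻¹ + (1 - a₂)⁻¹) * T ^ (κ + 1 - c),
    by positivity, fun r t hr hrt htT => ?_⟩
  refine setLIntegral_kernel_comp_le (k := k) (D := D₁ + D₂) (fun r s hr hrs => ?_)
    (fun r s t hr hrs hst hs => ?_) (fun r s t hr hrs hst hs => ?_) (fun r v hr hrv hvT => ?_)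
    (fun u t hu hut => ?_)
    (add_nonneg hD₁ hD₂) hK.le hc.1 hc.2 hcκ.le hr hrt htT <;> simp only [hk]
  · exact add_nonneg (powerKernel.nonneg (hr.trans hrs).le hrs.le)
      (powerKernel.nonneg (hr.trans hrs).le hrs.le)
  · rw [mul_add]
    exact add_le_add
      (powerKernel.le_two_mul_of_far_from_diag ha₁.1 ha₁.2.le (by linarith) (by linarith) hs)
      (powerKernel.le_two_mul_of_far_from_diag ha₂.1 ha₂.2.le (by linarith) (by linarith) hs)
  · rw [mul_add]
    exact add_le_add
      (powerKernel.le_two_mul_of_far_from_start hμ₁ ha₁.1 ha₁.2.le hr.le hrs hst.le hs)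
      (powerKernel.le_two_mul_of_far_from_start hμ₂ ha₂.1 ha₂.2.le hr.le hrs hst.le hs)
  · simp_rw [mul_add]
    exact setLIntegral_ofReal_add_le (by unfold powerKernel; fun_prop) hD₁ hD₂
      (hD₁_le r v hr hrv hvT) (hD₂_le r v hr hrv hvT)
  · have ht : 0 < t := hu.trans hut
    rw [add_mul]
    refine setLIntegral_ofReal_add_le (by unfold powerKernel; fun_prop) (by positivity)
      (by positivity) ?_ ?_
    · simpa only [← hκ₁] using powerKernel.setLIntegral_snd_le ha₁.2 hu.le hut
    · simpa only [← hκ₂] using powerKernel.setLIntegral_snd_le ha₂.2 hu.le hut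

/-- the composition of the kinetic kernel with itself (with an extra
singular factor `s^{-γ/α}`) is controlled by a single kernel integral. -/
theorem Gker_composition
    (α β₀ Λ T β γ : ℝ)
    (hα : α ∈ Ioc (1 : ℝ) 2) (hβ₀ : β₀ ∈ Ioo (-1 : ℝ) 0)
    (hΛ : Λ ∈ Ioo (0 : ℝ) (α - 1)) (hT : 0 < T)
    (hβ : β ∈ Ico (0 : ℝ) (min (β₀ + α) (α - Λ)))
    (hγ : γ ∈ Ico (0 : ℝ) (min α (α - 1 + β - β₀))) :
    ∃ C : ℝ, 0 < C ∧ ∀ t ∈ Ioc (0 : ℝ) T, ∀ f : ℝ → ℝ,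
      Measurable f → (∀ s, 0 ≤ f s) →
      (∫⁻ s in Ioo (0 : ℝ) t,
          ENNReal.ofReal (Gker α β₀ Λ β t s * s ^ (-(γ / α))) *
            ∫⁻ r in Ioo (0 : ℝ) s, ENNReal.ofReal (Gker α β₀ Λ β s r * f r)) ≤
        ENNReal.ofReal C *
          ∫⁻ s in Ioo (0 : ℝ) t, ENNReal.ofReal (Gker α β₀ Λ β t s * f s) := by
  have hα₀ : 0 < α := by linarith [hα.1]
  have hγα : γ < α := hγ.2.trans_le (min_le_left _ _)
  have hγκ : γ / α < (β - β₀ - 1) / α + 1 := by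
    rw [div_add_one hα₀.ne', div_lt_div_iff_of_pos_right hα₀]
    linarith [hγ.2.trans_le (min_le_right _ _)]
  obtain ⟨C, hC, hkernel⟩ := exists_setLIntegral_powerKernel_add_comp_le (k := Gker α β₀ Λ β) rfl
    (div_nonneg (by linarith [hβ.1, hβ₀.2]) hα₀.le) (div_nonneg (by linarith [hβ.1, hΛ.1]) hα₀.le)
    ⟨by positivity, (div_lt_one hα₀).mpr hα.1⟩
    ⟨div_nonneg (by linarith [hΛ.1, hβ₀.1]) hα₀.le,
      (div_lt_one hα₀).mpr (by linarith [hΛ.2, hβ₀.2])⟩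
    (by ring) (by ring) ⟨div_nonneg hγ.1 hα₀.le, (div_le_one hα₀).mpr hγα.le⟩ hγκ hT
  refine ⟨C, hC, fun t ht f hf hf₀ => ?_⟩
  have hB : Measurable (Function.uncurry fun s r => ENNReal.ofReal (Gker α β₀ Λ β s r)) := by
    unfold Function.uncurry Gker
    fun_prop
  simp_rw [ENNReal.ofReal_mul' (hf₀ _)]
  exact setLIntegral_Ioo_mul_setLIntegral_Ioo_le (by unfold Gker; fun_prop) hB (by fun_prop)
    ENNReal.ofReal_ne_top fun r hr => hkernel r t hr.1 hr.2 ht.2
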